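/- (Lemma 2 of the paper.) Let γₙ denote the standard Gaussian measure on ℝⁿ, let f : ℝⁿ → ℝ be Lipschitz with constant L₀ ≥ 0 and ρ-weakly convex in the sense that x ↦ f(x) + (ρ/2)‖x‖² is convex, with ρ ≥ 0. Let u > 0 and let f_u(x) = ∫ f(x + u·z) dγₙ(z) be the Gaussian smoothing, assumed differentiable at the points x and y. Then ⟨∇f_u(x) − ∇f_u(y), x − y⟩ ≥ −ρ‖x − y‖² − 4·L₀·u·‖x − y‖. -/

import Mathlib

/-!
The `ρ`-weak convexity of `f` is strong convexity with the negative modulus `-ρ`, i.e.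
`f (a • x + b • y) ≤ a f x + b f y + ρ/2 · a b ‖x - y‖²` for `a + b = 1`. Since
`(x + u z) - (y + u z) = x - y`, this inequality survives averaging the translates
`f (· + u z)` over `z`, so `f_u` is again `ρ`-weakly convex. For any `m`-strongly convex
function the gradient satisfies `⟪∇f x - ∇f y, x - y⟫ ≥ m ‖x - y‖²` (restrict the convex
function `f - m/2 ‖·‖²` to the segment `[x, y]`), which with `m = -ρ` gives the bound even
without the `4 L₀ u ‖x - y‖` term.
-/

open MeasureTheory ProbabilityTheory
open scoped RealInnerProductSpace

/-- The standard Gaussian measure on `ℝⁿ`. -/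
noncomputable def stdGaussian (n : ℕ) : Measure (EuclideanSpace ℝ (Fin n)) :=
  (Measure.pi fun _ : Fin n => gaussianReal 0 1).map (MeasurableEquiv.toLp 2 (Fin n → ℝ))

open Set

lemma stdGaussian_eq_stdGaussian_euclideanSpace (n : ℕ) :
    _root_.stdGaussian n = ProbabilityTheory.stdGaussian (EuclideanSpace ℝ (Fin n)) :=
  map_pi_eq_stdGaussian

lemma LipschitzWith.integrable_comp_const_add {Ω E : Type*} [MeasurableSpace Ω]
    [NormedAddCommGroup E] {μ : Measure Ω} [IsFiniteMeasure μ] {K : NNReal} {f : E → ℝ}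
    (hf : LipschitzWith K f) {v : Ω → E} (hv : Integrable v μ) (w : E) :
    Integrable (fun z => f (w + v z)) μ := by
  have hshift := (hf.comp (isometry_add_left w).lipschitz).sub (LipschitzWith.const (f w))
  have hcomp := (hshift.comp_memLp (by simp) (memLp_one_iff_integrable.2 hv)).integrable le_rfl
  exact (hcomp.add (integrable_const (f w))).congr (ae_of_all _ fun z => by simp)

section

variable {E : Type*} [NormedAddCommGroup E] [NormedSpace ℝ E]

theorem UniformConvexOn.integral_comp_add {Ω : Type*} [MeasurableSpace Ω] {μ : Measure Ω}
    [IsProbabilityMeasure μ] {φ : ℝ → ℝ} {f : E → ℝ} (hf : UniformConvexOn univ φ f)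
    {v : Ω → E} (hint : ∀ w, Integrable (fun z => f (w + v z)) μ) :
    UniformConvexOn univ φ fun w => ∫ z, f (w + v z) ∂μ := by
  refine ⟨convex_univ, fun x _ y _ a b ha hb hab => ?_⟩
  have hpoint : ∀ z, f (a • x + b • y + v z)
      ≤ a * f (x + v z) + b * f (y + v z) - a * b * φ ‖x - y‖ := fun z => by
    have h := hf.2 (mem_univ (x + v z)) (mem_univ (y + v z)) ha hb hab
    rwa [smul_add, smul_add, add_add_add_comm, ← add_smul, hab, one_smul,
      add_sub_add_right_eq_sub] at h
  have hcomb : Integrable (fun z => a * f (x + v z) + b * f (y + v z)) μ :=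
    ((hint x).const_mul a).add ((hint y).const_mul b)
  calc ∫ z, f (a • x + b • y + v z) ∂μ
      ≤ ∫ z, (a * f (x + v z) + b * f (y + v z) - a * b * φ ‖x - y‖) ∂μ :=
        integral_mono (hint _) (hcomb.sub (integrable_const _)) hpoint
    _ = a • ∫ z, f (x + v z) ∂μ + b • ∫ z, f (y + v z) ∂μ - a * b * φ ‖x - y‖ := by
        rw [integral_sub hcomb (integrable_const _),
          integral_add ((hint x).const_mul a) ((hint y).const_mul b), integral_const_mul,
          integral_const_mul, integral_const]
        simp

theorem ConvexOn.hasFDerivAt_apply_sub_le {φ : E → ℝ} (hφ : ConvexOn ℝ univ φ) {x y : E}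
    {φx φy : E →L[ℝ] ℝ} (hx : HasFDerivAt φ φx x) (hy : HasFDerivAt φ φy y) :
    φx (y - x) ≤ φy (y - x) := by
  have hline : ConvexOn ℝ univ (φ ∘ AffineMap.lineMap (k := ℝ) x y) := hφ.comp_affineMap _
  have h0 : HasDerivAt (φ ∘ AffineMap.lineMap (k := ℝ) x y) (φx (y - x)) 0 := by
    refine HasFDerivAt.comp_hasDerivAt (0 : ℝ) ?_ AffineMap.hasDerivAt_lineMap
    simpa using hx
  have h1 : HasDerivAt (φ ∘ AffineMap.lineMap (k := ℝ) x y) (φy (y - x)) 1 := by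
    refine HasFDerivAt.comp_hasDerivAt (1 : ℝ) ?_ AffineMap.hasDerivAt_lineMap
    simpa using hy
  exact (hline.le_slope_of_hasDerivAt (mem_univ 0) (mem_univ 1) one_pos h0).trans
    (hline.slope_le_of_hasDerivAt (mem_univ 0) (mem_univ 1) one_pos h1)

end

theorem StrongConvexOn.mul_norm_sub_sq_le_inner_sub {F : Type*} [NormedAddCommGroup F]
    [InnerProductSpace ℝ F] [CompleteSpace F] {m : ℝ} {f : F → ℝ} (hf : StrongConvexOn univ m f)
    {x y gx gy : F} (hx : HasGradientAt f gx x) (hy : HasGradientAt f gy y) :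
    m * ‖x - y‖ ^ 2 ≤ ⟪gx - gy, x - y⟫ := by
  have hconv := strongConvexOn_iff_convex.1 hf
  have hderiv : ∀ {p g : F}, HasGradientAt f g p →
      HasFDerivAt (fun q => f q - m / 2 * ‖q‖ ^ 2)
        (InnerProductSpace.toDual ℝ F g - (m / 2) • 2 • innerSL ℝ p) p := fun hp =>
    (hasGradientAt_iff_hasFDerivAt.1 hp).sub
      ((hasStrictFDerivAt_norm_sq _).hasFDerivAt.const_mul (m / 2))
  have h := hconv.hasFDerivAt_apply_sub_le (hderiv hx) (hderiv hy)
  simp only [sub_apply, smul_apply, innerSL_apply_apply,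
    InnerProductSpace.toDual_apply_apply, smul_eq_mul, nsmul_eq_mul] at h
  have hnorm : ‖x - y‖ ^ 2 = ⟪y, y - x⟫ - ⟪x, y - x⟫ := by
    rw [← inner_sub_left, real_inner_self_eq_norm_sq, norm_sub_rev]
  rw [hnorm, ← neg_sub y x, inner_neg_right, inner_sub_left]
  linarith

theorem stmt7_general (n : ℕ) (f : EuclideanSpace ℝ (Fin n) → ℝ) (L₀ : ℝ) (hL₀ : 0 ≤ L₀)
    (hf : ∀ x y, |f x - f y| ≤ L₀ * ‖x - y‖) (ρ : ℝ)
    (hconv : ConvexOn ℝ Set.univ (fun x => f x + ρ / 2 * ‖x‖ ^ 2)) (u : ℝ) (hu : 0 < u)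
    (x y gx gy : EuclideanSpace ℝ (Fin n))
    (hgx : HasGradientAt (fun w => ∫ z, f (w + u • z) ∂(stdGaussian n)) gx x)
    (hgy : HasGradientAt (fun w => ∫ z, f (w + u • z) ∂(stdGaussian n)) gy y) :
    ⟪gx - gy, x - y⟫ ≥ -ρ * ‖x - y‖ ^ 2 - 4 * L₀ * u * ‖x - y‖ := by
  rw [stdGaussian_eq_stdGaussian_euclideanSpace] at hgx hgy
  have hlip : LipschitzWith (Real.toNNReal L₀) f := LipschitzWith.of_dist_le_mul fun a b => by
    rw [Real.dist_eq, dist_eq_norm, Real.coe_toNNReal L₀ hL₀]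
    exact hf a b
  have hweak : StrongConvexOn univ (-ρ) f := by
    simpa [strongConvexOn_iff_convex, neg_div] using hconv
  have hscaled : Integrable (u • id) (ProbabilityTheory.stdGaussian (EuclideanSpace ℝ (Fin n))) :=
    IsGaussian.integrable_id.smul u
  have hsmooth : StrongConvexOn univ (-ρ)
      fun w => ∫ z, f (w + u • z) ∂(ProbabilityTheory.stdGaussian (EuclideanSpace ℝ (Fin n))) :=
    hweak.integral_comp_add (hlip.integrable_comp_const_add hscaled)
  have hmono := hsmooth.mul_norm_sub_sq_le_inner_sub hgx hgy
  have hslack : 0 ≤ 4 * L₀ * u * ‖x - y‖ := by positivity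
  linarith

/-- Lemma 2 of the paper: if `f` is `L₀`-Lipschitz and `ρ`-weakly convex and the Gaussian
smoothing `f_u` has gradients `gx` at `x` and `gy` at `y`, then
`⟪gx - gy, x - y⟫ ≥ -ρ‖x - y‖² - 4 L₀ u ‖x - y‖`. -/
theorem stmt7 (n : ℕ) (f : EuclideanSpace ℝ (Fin n) → ℝ) (L₀ : ℝ) (hL₀ : 0 ≤ L₀)
    (hf : ∀ x y, |f x - f y| ≤ L₀ * ‖x - y‖) (ρ : ℝ) (hρ : 0 ≤ ρ)
    (hconv : ConvexOn ℝ Set.univ (fun x => f x + ρ / 2 * ‖x‖ ^ 2)) (u : ℝ) (hu : 0 < u)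
    (x y gx gy : EuclideanSpace ℝ (Fin n))
    (hgx : HasGradientAt (fun w => ∫ z, f (w + u • z) ∂(stdGaussian n)) gx x)
    (hgy : HasGradientAt (fun w => ∫ z, f (w + u • z) ∂(stdGaussian n)) gy y) :
    ⟪gx - gy, x - y⟫ ≥ -ρ * ‖x - y‖ ^ 2 - 4 * L₀ * u * ‖x - y‖ :=
  stmt7_general n f L₀ hL₀ hf ρ hconv u hu x y gx gy hgx hgy
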